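/- Let M be a binary matroid and C a circuit of M with k ≥ 4 elements having no chord. Then e_C ∉ ℑ(𝔠_{k−1}), i.e., the monomial of C does not lie in the ideal generated by differentials of circuits with at most k−1 elements. -/

import Mathlib

open ExteriorAlgebra

/-- The Grassmann algebra over `K` on generators `e 0, ..., e (n-1)`. -/
abbrev Grass (K : Type) [Field K] (n : ℕ) := ExteriorAlgebra K (Fin n → K)

/-- The generator `e i`. -/
noncomputable def gen (K : Type) [Field K] (n : ℕ) (i : Fin n) : Grass K n :=
  ExteriorAlgebra.ι K (Pi.single i 1)

/-- The monomial associated to a list of indices. -/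
noncomputable def monList (K : Type) [Field K] (n : ℕ) (l : List (Fin n)) : Grass K n :=
  (l.map (gen K n)).prod

/-- The monomial `e_X` of a subset `X ⊆ [n]`, factors in increasing order. -/
noncomputable def mon (K : Type) [Field K] (n : ℕ) (X : Finset (Fin n)) : Grass K n :=
  monList K n (X.sort (· ≤ ·))

/-- The degree `-1` antiderivation `∂` on the Grassmann algebra with `∂ (e i) = 1`
(left contraction with the covector sending each generator to `1`). -/
noncomputable def bd (K : Type) [Field K] (n : ℕ) : Grass K n →ₗ[K] Grass K n :=
  CliffordAlgebra.contractLeft (∑ i : Fin n, LinearMap.proj i)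

/-- The two-sided ideal `ℑ(𝔛)` generated by the differentials `∂ e_Y`, `Y ∈ 𝔛`. -/
noncomputable def OSIdeal (K : Type) [Field K] (n : ℕ) (X : Set (Finset (Fin n))) :
    TwoSidedIdeal (Grass K n) :=
  TwoSidedIdeal.span ((fun Y => bd K n (mon K n Y)) '' X)

/-- A circuit of a matroid: a minimal dependent (finite) set. -/
def IsCircuit {α : Type} [DecidableEq α] (M : Matroid α) (C : Finset α) : Prop :=
  M.Dep (C : Set α) ∧ ∀ D : Finset α, D ⊂ C → ¬ M.Dep (D : Set α)

/-- `i` is a chord of the circuit `C`, witnessed by circuits `C₁, C₂` with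
`C₁ ∩ C₂ = {i}` and `C = C₁ Δ C₂`. -/
def IsChord {α : Type} [DecidableEq α] (M : Matroid α) (C : Finset α) (i : α) : Prop :=
  ∃ C₁ C₂ : Finset α, IsCircuit M C₁ ∧ IsCircuit M C₂ ∧ C₁ ∩ C₂ = {i} ∧ C = symmDiff C₁ C₂

def HasChord {α : Type} [DecidableEq α] (M : Matroid α) (C : Finset α) : Prop :=
  ∃ i, IsChord M C i

/-- `M` is `ℓ`-chordal: every circuit with at least `ℓ` elements has a chord. -/
def Chordal {α : Type} [DecidableEq α] (M : Matroid α) (l : ℕ) : Prop :=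
  ∀ C : Finset α, IsCircuit M C → l ≤ C.card → HasChord M C

/-- `M` is simple: every circuit has at least 3 elements. -/
def SimpleM {α : Type} [DecidableEq α] (M : Matroid α) : Prop :=
  ∀ C : Finset α, IsCircuit M C → 3 ≤ C.card

/-- `M` is binary: the symmetric difference of two distinct circuits contains a circuit. -/
def BinaryM {α : Type} [DecidableEq α] (M : Matroid α) : Prop :=
  ∀ C D : Finset α, IsCircuit M C → IsCircuit M D → C ≠ D →
    ∃ C', IsCircuit M C' ∧ C' ⊆ symmDiff C D

/-- The set `𝔠` of circuits of `M`. -/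
def Circuits {α : Type} [DecidableEq α] (M : Matroid α) : Set (Finset α) :=
  {C | IsCircuit M C}

/-- The set `𝔠_k` of circuits of `M` with at most `k` elements. -/
def CircuitsLe {α : Type} [DecidableEq α] (M : Matroid α) (k : ℕ) : Set (Finset α) :=
  {C | IsCircuit M C ∧ C.card ≤ k}

/-!
Let `φ_C = restrictHom K n C` be the algebra endomorphism of the Grassmann algebra that kills
every generator outside `C` and fixes those in `C`. It fixes `e_C ≠ 0`, so it suffices that `φ_C` kills the
ideal, i.e. every generator `∂ e_D` with `D` a circuit, `|D| < |C|`. Every term of `∂ e_D`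
still contains all but one element of `D`, so it suffices that `D` has two elements outside
`C`. It has one at least, since a circuit properly contained in `C` is impossible; if it had
exactly one, binarity would make it a chord of `C`.
-/

section Circuits

variable {α : Type} [DecidableEq α] {M : Matroid α}

lemma IsCircuit.eq_of_subset {C D : Finset α} (hC : IsCircuit M C) (hD : IsCircuit M D)
    (h : D ⊆ C) : D = C := by
  by_contra hne
  exact hC.2 D (Finset.ssubset_iff_subset_ne.mpr ⟨h, hne⟩) hD.1

/-- Applying binarity twice: first to `C, D`, which yields a circuit `C' ∋ j` with
`D ∩ C' = {j}`, then to `D, C'`, which yields a circuit inside `D Δ C' ⊆ C`, hence `C` itself. -/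
lemma BinaryM.isChord_of_sdiff_eq_singleton (hb : BinaryM M) {C D : Finset α} {j x : α}
    (hC : IsCircuit M C) (hD : IsCircuit M D) (hDC : D \ C = {j}) (hxD : x ∈ D) (hxC : x ∈ C) :
    IsChord M C j := by
  have hmem : ∀ y, y ∈ D ∧ y ∉ C ↔ y = j := by
    simpa only [Finset.ext_iff, Finset.mem_sdiff, Finset.mem_singleton] using hDC
  obtain ⟨hjD, hjC⟩ := (hmem j).mpr rfl
  obtain ⟨C', hC', hC'symm⟩ := hb C D hC hD fun h => hjC (h ▸ hjD)
  have hC'sub : ∀ y ∈ C', (y ∈ C ∧ y ∉ D) ∨ y = j := by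
    intro y hy
    have := Finset.mem_symmDiff.mp (hC'symm hy)
    grind
  have hjC' : j ∈ C' := by
    by_contra hjC'
    have hC'C : C' = C := hC.eq_of_subset hC' fun y hy => by grind
    grind
  have hinter : D ∩ C' = {j} := by
    ext y
    simp only [Finset.mem_inter, Finset.mem_singleton]
    grind
  obtain ⟨C'', hC'', hC''sub⟩ := hb D C' hD hC' (by grind)
  have hDC'C : symmDiff D C' ⊆ C := fun y hy => by
    have := Finset.mem_symmDiff.mp hy
    grind
  have hC''C : C'' = C := hC.eq_of_subset hC'' (hC''sub.trans hDC'C)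
  exact ⟨D, C', hD, hC', hinter, Finset.Subset.antisymm (hC''C ▸ hC''sub) hDC'C⟩

lemma one_lt_card_sdiff_of_not_hasChord (hs : SimpleM M) (hb : BinaryM M) {C D : Finset α}
    (hC : IsCircuit M C) (hch : ¬ HasChord M C) (hD : IsCircuit M D) (hDC : D.card < C.card) :
    1 < (D \ C).card := by
  by_contra! hle
  have hsplit := Finset.card_sdiff_add_card_inter D C
  interval_cases h : (D \ C).card
  · have hsub : D ⊆ C := Finset.sdiff_eq_empty_iff_subset.mp (Finset.card_eq_zero.mp h)
    rw [hC.eq_of_subset hD hsub] at hDC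
    exact lt_irrefl _ hDC
  · obtain ⟨j, hj⟩ := Finset.card_eq_one.mp h
    obtain ⟨x, hx⟩ : (D ∩ C).Nonempty := by
      rw [← Finset.card_pos]
      have := hs D hD
      omega
    obtain ⟨hxD, hxC⟩ := Finset.mem_inter.mp hx
    exact hch ⟨j, hb.isChord_of_sdiff_eq_singleton hC hD hj hxD hxC⟩

end Circuits

section Grassmann

variable {K : Type} [Field K] {n : ℕ}

lemma monList_cons (a : Fin n) (l : List (Fin n)) :
    monList K n (a :: l) = gen K n a * monList K n l := by
  simp [monList]

lemma contractLeft_gen_mul (d : Module.Dual K (Fin n → K)) (a : Fin n) (x : Grass K n) :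
    CliffordAlgebra.contractLeft d (gen K n a * x) =
      d (Pi.single a 1) • x - gen K n a * CliffordAlgebra.contractLeft d x :=
  CliffordAlgebra.contractLeft_ι_mul _ _ _

lemma bd_gen_mul (a : Fin n) (x : Grass K n) :
    bd K n (gen K n a * x) = x - gen K n a * bd K n x := by
  rw [bd, contractLeft_gen_mul]
  simp [Pi.single_apply]

lemma contractLeft_proj_monList_of_notMem {a : Fin n} {l : List (Fin n)} (h : a ∉ l) :
    CliffordAlgebra.contractLeft (LinearMap.proj a) (monList K n l) = 0 := by
  induction l with
  | nil => simp [monList]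
  | cons b l ih =>
    rw [List.mem_cons, not_or] at h
    rw [monList_cons, contractLeft_gen_mul, ih h.2]
    simp [Pi.single_eq_of_ne h.1]

/-- Contracting with the coordinate of the first factor peels that factor off. -/
lemma monList_ne_zero {l : List (Fin n)} (h : l.Nodup) : monList K n l ≠ 0 := by
  induction l with
  | nil => simp [monList]
  | cons a l ih =>
    rw [List.nodup_cons] at h
    intro h0
    have hpeel : CliffordAlgebra.contractLeft (LinearMap.proj a) (monList K n (a :: l)) =
        monList K n l := by
      rw [monList_cons, contractLeft_gen_mul, contractLeft_proj_monList_of_notMem h.1]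
      simp
    rw [h0, map_zero] at hpeel
    exact ih h.2 hpeel.symm

lemma mon_ne_zero (X : Finset (Fin n)) : mon K n X ≠ 0 :=
  monList_ne_zero (Finset.sort_nodup X _)

variable (K n) in
noncomputable def restrictHom (C : Finset (Fin n)) : Grass K n →ₐ[K] Grass K n :=
  ExteriorAlgebra.map (LinearMap.pi fun i => if i ∈ C then LinearMap.proj i else 0)

lemma restrictHom_gen (C : Finset (Fin n)) (j : Fin n) :
    restrictHom K n C (gen K n j) = if j ∈ C then gen K n j else 0 := by
  have hsingle : (LinearMap.pi fun i => if i ∈ C then LinearMap.proj (R := K) i else 0)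
      (Pi.single j 1 : Fin n → K) = if j ∈ C then Pi.single j 1 else 0 := by
    ext i
    rcases eq_or_ne i j with rfl | hij <;> by_cases hi : i ∈ C <;> simp_all [ite_apply]
  rw [restrictHom, gen, ExteriorAlgebra.map_apply_ι, hsingle]
  split_ifs <;> simp

lemma restrictHom_monList_of_subset {C : Finset (Fin n)} {l : List (Fin n)}
    (h : ∀ j ∈ l, j ∈ C) : restrictHom K n C (monList K n l) = monList K n l := by
  induction l with
  | nil => simp [monList]
  | cons a l ih =>
    rw [List.forall_mem_cons] at h
    rw [monList_cons, map_mul, restrictHom_gen, if_pos h.1, ih h.2]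

lemma restrictHom_monList_of_notMem {C : Finset (Fin n)} {l : List (Fin n)} {j : Fin n}
    (hjl : j ∈ l) (hjC : j ∉ C) : restrictHom K n C (monList K n l) = 0 := by
  induction l with
  | nil => simp at hjl
  | cons a l ih =>
    rw [monList_cons, map_mul]
    rcases List.mem_cons.mp hjl with rfl | hjl
    · rw [restrictHom_gen, if_neg hjC, zero_mul]
    · rw [ih hjl, mul_zero]

lemma restrictHom_bd_monList {C : Finset (Fin n)} {l : List (Fin n)} {j₁ j₂ : Fin n}
    (h₁ : j₁ ∈ l) (h₂ : j₂ ∈ l) (hne : j₁ ≠ j₂) (h₁C : j₁ ∉ C) (h₂C : j₂ ∉ C) :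
    restrictHom K n C (bd K n (monList K n l)) = 0 := by
  induction l with
  | nil => simp at h₁
  | cons a l ih =>
    rw [monList_cons, bd_gen_mul, map_sub, map_mul, restrictHom_gen]
    by_cases ha : a ∈ C
    · have h₁l : j₁ ∈ l := (List.mem_cons.mp h₁).resolve_left fun h => h₁C (h ▸ ha)
      have h₂l : j₂ ∈ l := (List.mem_cons.mp h₂).resolve_left fun h => h₂C (h ▸ ha)
      rw [restrictHom_monList_of_notMem h₁l h₁C, ih h₁l h₂l, mul_zero, sub_zero]
    · obtain ⟨j, hjl, hjC⟩ : ∃ j ∈ l, j ∉ C := by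
        rcases List.mem_cons.mp h₁ with rfl | h₁l
        · exact ⟨j₂, (List.mem_cons.mp h₂).resolve_left (Ne.symm hne), h₂C⟩
        · exact ⟨j₁, h₁l, h₁C⟩
      rw [restrictHom_monList_of_notMem hjl hjC, if_neg ha, zero_mul, sub_zero]

lemma restrictHom_mon_self (C : Finset (Fin n)) : restrictHom K n C (mon K n C) = mon K n C :=
  restrictHom_monList_of_subset fun _ hj => (Finset.mem_sort _).mp hj

lemma restrictHom_bd_mon {C D : Finset (Fin n)} (h : 1 < (D \ C).card) :
    restrictHom K n C (bd K n (mon K n D)) = 0 := by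
  obtain ⟨j₁, hj₁, j₂, hj₂, hne⟩ := Finset.one_lt_card.mp h
  rw [Finset.mem_sdiff, ← Finset.mem_sort (· ≤ ·)] at hj₁ hj₂
  exact restrictHom_bd_monList hj₁.1 hj₂.1 hne hj₁.2 hj₂.2

end Grassmann

theorem stmt9_general (K : Type) [Field K] (n : ℕ) (M : Matroid (Fin n))
    (hs : SimpleM M) (hb : BinaryM M) (C : Finset (Fin n)) (hC : IsCircuit M C)
    (hch : ¬ HasChord M C) :
    mon K n C ∉ OSIdeal K n (CircuitsLe M (C.card - 1)) := by
  have hle : OSIdeal K n (CircuitsLe M (C.card - 1)) ≤ TwoSidedIdeal.ker (restrictHom K n C) := by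
    rw [OSIdeal, TwoSidedIdeal.span_le]
    rintro _ ⟨D, ⟨hD, hDcard⟩, rfl⟩
    have hDC : D.card < C.card := by
      have := hs C hC
      omega
    exact (TwoSidedIdeal.mem_ker _).mpr
      (restrictHom_bd_mon (one_lt_card_sdiff_of_not_hasChord hs hb hC hch hD hDC))
  intro hmem
  have hker := (TwoSidedIdeal.mem_ker _).mp (hle hmem)
  rw [restrictHom_mon_self] at hker
  exact mon_ne_zero C hker

/-- in a binary matroid, if a circuit `C` with `|C| = k ≥ 4` has no chord,
then `e_C ∉ ℑ(𝔠_{k-1})`. -/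
theorem stmt9 (K : Type) [Field K] (n : ℕ) (M : Matroid (Fin n)) (hE : M.E = Set.univ)
    (hs : SimpleM M) (hb : BinaryM M) (C : Finset (Fin n)) (hC : IsCircuit M C)
    (hk : 4 ≤ C.card) (hch : ¬ HasChord M C) :
    mon K n C ∉ OSIdeal K n (CircuitsLe M (C.card - 1)) :=
  stmt9_general K n M hs hb C hC hch
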